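/- In the FTS of the two-branch example, each individual product satisfies the diamond formula while the two-product family does not satisfy the family diamond: p₁ ⊨_F ⟨a|⊤⟩⊤ and p₂ ⊨_F ⟨a|⊤⟩⊤, but {p₁, p₂} ⊭'_F ⟪a|⊤⟫⊤. -/

import Mathlib

/-! Each of p₁, p₂ enables its own `a`-transition out of s₀ (p₁ the one guarded by f, p₂ the one
guarded by ¬f). The family diamond, however, needs one transition enabled for the whole family,
and the guards f and ¬f separate p₁ from p₂. -/

namespace SPLmu

/-- A feature transition system: `theta s a t` is the feature expression
(identified with the set of products satisfying it) guarding the transition. -/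
structure FTS (S A P : Type) where
  theta : S → A → S → Set P
  init : S

/-- A labeled transition system. -/
structure LTS (S A : Type) where
  trans : S → A → S → Prop
  init : S

/-- Projection of an FTS onto a product. -/
def FTS.proj {S A P : Type} (F : FTS S A P) (p : P) : LTS S A :=
  ⟨fun s a t => p ∈ F.theta s a t, F.init⟩

/-- Knaster–Tarski least (pre)fixpoint. -/
def slfp {α : Type} (f : Set α → Set α) : Set α := ⋂₀ {V | f V ⊆ V}

/-- Knaster–Tarski greatest (post)fixpoint. -/
def sgfp {α : Type} (f : Set α → Set α) : Set α := ⋃₀ {V | V ⊆ f V}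

/-- The modal mu-calculus μL. -/
inductive MuL (A X : Type) : Type where
  | bot | top
  | neg : MuL A X → MuL A X
  | or  : MuL A X → MuL A X → MuL A X
  | and : MuL A X → MuL A X → MuL A X
  | dia : A → MuL A X → MuL A X
  | box : A → MuL A X → MuL A X
  | var : X → MuL A X
  | mu  : X → MuL A X → MuL A X
  | nu  : X → MuL A X → MuL A X

/-- The feature mu-calculus μLf (also used as the syntax of μL'f, whose
modality ⟪a|χ⟫ corresponds to `dia`; the translation `fm` is then the identity). -/
inductive MuLf (A X P : Type) : Type where
  | bot | top
  | neg : MuLf A X P → MuLf A X P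
  | or  : MuLf A X P → MuLf A X P → MuLf A X P
  | and : MuLf A X P → MuLf A X P → MuLf A X P
  | dia : A → Set P → MuLf A X P → MuLf A X P
  | box : A → Set P → MuLf A X P → MuLf A X P
  | var : X → MuLf A X P
  | mu  : X → MuLf A X P → MuLf A X P
  | nu  : X → MuLf A X P → MuLf A X P

variable {S A X P : Type}

/-- Standard μL semantics over an LTS. -/
def MuL.sem [DecidableEq X] (L : LTS S A) : MuL A X → (X → Set S) → Set S
  | .bot, _ => ∅
  | .top, _ => Set.univ
  | .neg φ, ε => (MuL.sem L φ ε)ᶜ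
  | .or φ ψ, ε => MuL.sem L φ ε ∪ MuL.sem L ψ ε
  | .and φ ψ, ε => MuL.sem L φ ε ∩ MuL.sem L ψ ε
  | .dia a φ, ε => {s | ∃ t, L.trans s a t ∧ t ∈ MuL.sem L φ ε}
  | .box a φ, ε => {s | ∀ t, L.trans s a t → t ∈ MuL.sem L φ ε}
  | .var x, ε => ε x
  | .mu x φ, ε => slfp (fun V => MuL.sem L φ (Function.update ε x V))
  | .nu x φ, ε => sgfp (fun V => MuL.sem L φ (Function.update ε x V))

/-- Product-based μLf semantics over an FTS (sets of state-product pairs). -/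
def MuLf.sem [DecidableEq X] (F : FTS S A P) : MuLf A X P → (X → Set (S × P)) → Set (S × P)
  | .bot, _ => ∅
  | .top, _ => Set.univ
  | .neg φ, η => (MuLf.sem F φ η)ᶜ
  | .or φ ψ, η => MuLf.sem F φ η ∪ MuLf.sem F ψ η
  | .and φ ψ, η => MuLf.sem F φ η ∩ MuLf.sem F ψ η
  | .dia a χ φ, η =>
      {sp | sp.2 ∈ χ ∧ ∃ t, sp.2 ∈ F.theta sp.1 a t ∧ (t, sp.2) ∈ MuLf.sem F φ η}
  | .box a χ φ, η =>
      {sp | sp.2 ∈ χ → ∀ t, sp.2 ∈ F.theta sp.1 a t → (t, sp.2) ∈ MuLf.sem F φ η}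
  | .var x, η => η x
  | .mu x φ, η => slfp (fun V => MuLf.sem F φ (Function.update η x V))
  | .nu x φ, η => sgfp (fun V => MuLf.sem F φ (Function.update η x V))

/-- Family-based μL'f semantics over an FTS (sets of state-family pairs);
here `dia` plays the role of the family modality ⟪a|χ⟫. -/
def MuLf.fsem [DecidableEq X] (F : FTS S A P) :
    MuLf A X P → (X → Set (S × Set P)) → Set (S × Set P)
  | .bot, _ => ∅
  | .top, _ => Set.univ
  | .neg φ, ζ => (MuLf.fsem F φ ζ)ᶜ
  | .or φ ψ, ζ => MuLf.fsem F φ ζ ∪ MuLf.fsem F ψ ζ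
  | .and φ ψ, ζ => MuLf.fsem F φ ζ ∩ MuLf.fsem F ψ ζ
  | .dia a χ φ, ζ =>
      {sP | sP.2 ⊆ χ ∧ ∃ t, sP.2 ⊆ F.theta sP.1 a t ∧
        (t, sP.2 ∩ χ ∩ F.theta sP.1 a t) ∈ MuLf.fsem F φ ζ}
  | .box a χ φ, ζ =>
      {sP | (sP.2 ∩ χ).Nonempty → ∀ t, (sP.2 ∩ χ ∩ F.theta sP.1 a t).Nonempty →
        (t, sP.2 ∩ χ ∩ F.theta sP.1 a t) ∈ MuLf.fsem F φ ζ}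
  | .var x, ζ => ζ x
  | .mu x φ, ζ => slfp (fun W => MuLf.fsem F φ (Function.update ζ x W))
  | .nu x φ, ζ => sgfp (fun W => MuLf.fsem F φ (Function.update ζ x W))

-- The translation sm : μLf × 𝒫 → μL.
open Classical in
noncomputable def MuLf.sm : MuLf A X P → P → MuL A X
  | .bot, _ => .bot
  | .top, _ => .top
  | .neg φ, p => .neg (MuLf.sm φ p)
  | .or φ ψ, p => .or (MuLf.sm φ p) (MuLf.sm ψ p)
  | .and φ ψ, p => .and (MuLf.sm φ p) (MuLf.sm ψ p)
  | .dia a χ φ, p => if p ∈ χ then .dia a (MuLf.sm φ p) else .bot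
  | .box a χ φ, p => if p ∈ χ then .box a (MuLf.sm φ p) else .top
  | .var x, _ => .var x
  | .mu x φ, p => .mu x (MuLf.sm φ p)
  | .nu x φ, p => .nu x (MuLf.sm φ p)

/-- Free variables of a μLf formula. -/
def MuLf.fv : MuLf A X P → Set X
  | .bot => ∅
  | .top => ∅
  | .neg φ => MuLf.fv φ
  | .or φ ψ => MuLf.fv φ ∪ MuLf.fv ψ
  | .and φ ψ => MuLf.fv φ ∪ MuLf.fv ψ
  | .dia _ _ φ => MuLf.fv φ
  | .box _ _ φ => MuLf.fv φ
  | .var x => {x}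
  | .mu x φ => MuLf.fv φ \ {x}
  | .nu x φ => MuLf.fv φ \ {x}

/-- A μLf formula is closed if it has no free variables. -/
def MuLf.closed (φ : MuLf A X P) : Prop := MuLf.fv φ = ∅

/-- Negation-free μLf formulas. -/
def MuLf.negFree : MuLf A X P → Prop
  | .bot => True
  | .top => True
  | .neg _ => False
  | .or φ ψ => MuLf.negFree φ ∧ MuLf.negFree ψ
  | .and φ ψ => MuLf.negFree φ ∧ MuLf.negFree ψ
  | .dia _ _ φ => MuLf.negFree φ
  | .box _ _ φ => MuLf.negFree φ
  | .var _ => True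
  | .mu _ φ => MuLf.negFree φ
  | .nu _ φ => MuLf.negFree φ

/-- Diamond-free μLf formulas (no ⟨a|χ⟩ / ⟪a|χ⟫). -/
def MuLf.diaFree : MuLf A X P → Prop
  | .bot => True
  | .top => True
  | .neg φ => MuLf.diaFree φ
  | .or φ ψ => MuLf.diaFree φ ∧ MuLf.diaFree ψ
  | .and φ ψ => MuLf.diaFree φ ∧ MuLf.diaFree ψ
  | .dia _ _ _ => False
  | .box _ _ φ => MuLf.diaFree φ
  | .var _ => True
  | .mu _ φ => MuLf.diaFree φ
  | .nu _ φ => MuLf.diaFree φ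

mutual
/-- All free occurrences of `x` are under an even number of negations. -/
def MuLf.posIn (x : X) : MuLf A X P → Prop
  | .bot => True
  | .top => True
  | .neg φ => MuLf.negOcc x φ
  | .or φ ψ => MuLf.posIn x φ ∧ MuLf.posIn x ψ
  | .and φ ψ => MuLf.posIn x φ ∧ MuLf.posIn x ψ
  | .dia _ _ φ => MuLf.posIn x φ
  | .box _ _ φ => MuLf.posIn x φ
  | .var _ => True
  | .mu y φ => y = x ∨ MuLf.posIn x φ
  | .nu y φ => y = x ∨ MuLf.posIn x φ

/-- All free occurrences of `x` are under an odd number of negations. -/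
def MuLf.negOcc (x : X) : MuLf A X P → Prop
  | .bot => True
  | .top => True
  | .neg φ => MuLf.posIn x φ
  | .or φ ψ => MuLf.negOcc x φ ∧ MuLf.negOcc x ψ
  | .and φ ψ => MuLf.negOcc x φ ∧ MuLf.negOcc x ψ
  | .dia _ _ φ => MuLf.negOcc x φ
  | .box _ _ φ => MuLf.negOcc x φ
  | .var y => y ≠ x
  | .mu y φ => y = x ∨ MuLf.negOcc x φ
  | .nu y φ => y = x ∨ MuLf.negOcc x φ
end

/-- Well-formedness: fixpoint-bound variables occur positively. -/
def MuLf.wf : MuLf A X P → Prop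
  | .bot => True
  | .top => True
  | .neg φ => MuLf.wf φ
  | .or φ ψ => MuLf.wf φ ∧ MuLf.wf ψ
  | .and φ ψ => MuLf.wf φ ∧ MuLf.wf ψ
  | .dia _ _ φ => MuLf.wf φ
  | .box _ _ φ => MuLf.wf φ
  | .var _ => True
  | .mu x φ => MuLf.posIn x φ ∧ MuLf.wf φ
  | .nu x φ => MuLf.posIn x φ ∧ MuLf.wf φ

/-- Substitution φ[¬X/X] of ¬X for the free occurrences of X. -/
def MuLf.substNegVar [DecidableEq X] (x : X) : MuLf A X P → MuLf A X P
  | .bot => .bot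
  | .top => .top
  | .neg φ => .neg (MuLf.substNegVar x φ)
  | .or φ ψ => .or (MuLf.substNegVar x φ) (MuLf.substNegVar x ψ)
  | .and φ ψ => .and (MuLf.substNegVar x φ) (MuLf.substNegVar x ψ)
  | .dia a χ φ => .dia a χ (MuLf.substNegVar x φ)
  | .box a χ φ => .box a χ (MuLf.substNegVar x φ)
  | .var y => if y = x then .neg (.var y) else .var y
  | .mu y φ => if y = x then .mu y φ else .mu y (MuLf.substNegVar x φ)
  | .nu y φ => if y = x then .nu y φ else .nu y (MuLf.substNegVar x φ)

/-- Projection from state-family sets to state-product sets. -/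
def fp {S P : Type} (W : Set (S × Set P)) : Set (S × P) :=
  {sp | ∃ Pf : Set P, (sp.1, Pf) ∈ W ∧ sp.2 ∈ Pf}


inductive Feat : Type where
  | f | g
deriving DecidableEq

inductive St : Type where
  | s0 | s1 | s2
deriving DecidableEq

/-- The two-branch example FTS: s₀ →^{a|f} s₁ and s₀ →^{a|¬f} s₂. -/
def Fex : FTS St Unit (Set Feat) where
  theta s _ t :=
    match s, t with
    | .s0, .s1 => {p | Feat.f ∈ p}
    | .s0, .s2 => {p | Feat.f ∉ p}
    | _, _ => ∅
  init := .s0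

def pone : Set Feat := {Feat.f, Feat.g}
def ptwo : Set Feat := {Feat.g}

theorem MuLf.mem_sem_dia_top [DecidableEq X] (F : FTS S A P) (a : A) (η : X → Set (S × P))
    (s : S) (p : P) :
    (s, p) ∈ MuLf.sem F (.dia a Set.univ .top) η ↔ ∃ t, p ∈ F.theta s a t := by
  simp [MuLf.sem]

theorem MuLf.mem_fsem_dia_top [DecidableEq X] (F : FTS S A P) (a : A)
    (ζ : X → Set (S × Set P)) (s : S) (Q : Set P) :
    (s, Q) ∈ MuLf.fsem F (.dia a Set.univ .top) ζ ↔ ∃ t, Q ⊆ F.theta s a t := by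
  simp [MuLf.fsem]

theorem pone_mem_Fex_theta_s1 : pone ∈ Fex.theta .s0 () .s1 := by
  simp [Fex, pone]

theorem ptwo_mem_Fex_theta_s2 : ptwo ∈ Fex.theta .s0 () .s2 := by
  simp [Fex, ptwo]

theorem not_exists_Fex_theta_pair_subset :
    ¬ ∃ t, ({pone, ptwo} : Set (Set Feat)) ⊆ Fex.theta .s0 () t := by
  rintro ⟨t, hsub⟩
  have hone : pone ∈ Fex.theta .s0 () t := hsub (by simp)
  have htwo : ptwo ∈ Fex.theta .s0 () t := hsub (by simp)
  cases t <;> simp_all [Fex, pone, ptwo]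

/-- p₁ ⊨_F ⟨a|⊤⟩⊤ and p₂ ⊨_F ⟨a|⊤⟩⊤, but {p₁,p₂} ⊭'_F ⟪a|⊤⟫⊤. -/
theorem stmt14 :
    (Fex.init, pone) ∈
      MuLf.sem (X := Unit) Fex (.dia () Set.univ .top)
        (fun _ => (∅ : Set (St × Set Feat))) ∧
    (Fex.init, ptwo) ∈
      MuLf.sem (X := Unit) Fex (.dia () Set.univ .top)
        (fun _ => (∅ : Set (St × Set Feat))) ∧
    (Fex.init, ({pone, ptwo} : Set (Set Feat))) ∉
      MuLf.fsem (X := Unit) Fex (.dia () Set.univ .top)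
        (fun _ => (∅ : Set (St × Set (Set Feat)))) :=
  ⟨(MuLf.mem_sem_dia_top _ _ _ _ _).2 ⟨.s1, pone_mem_Fex_theta_s1⟩,
    (MuLf.mem_sem_dia_top _ _ _ _ _).2 ⟨.s2, ptwo_mem_Fex_theta_s2⟩,
    fun h => not_exists_Fex_theta_pair_subset ((MuLf.mem_fsem_dia_top _ _ _ _ _).1 h)⟩

end SPLmu
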